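/- Let K be a field with char K = 2, let a ∈ K with a ≠ 0, and let λ ∈ K with λ ≠ 0, λ ≠ 1 and λ not a primitive third root of unity (equivalently (3)!_λ ≠ 0). Let V = K·x be a one-dimensional K-vector space, let c := id_{V⊗V}, and let b : V ⊗ V → V be the linear map with b(x ⊗ x) = a·x. Then: (i) c satisfies the braid equation and is of Hecke type of mark λ; (ii) b is a c-bracket on (V, c); (iii) the canonical map ι_{c,b} : V → U(V, c, b) is injective; and (iv) b ≠ 0. (Hence the hypothesis char K ≠ 2 cannot be removed from the theorem asserting that injectivity of ι_{c,b} forces b = 0 when λ ≠ 1.) -/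

import Mathlib

open TensorProduct

noncomputable section

variable {K : Type*} [Field K] {V : Type*} [AddCommGroup V] [Module K V]

/-- The endomorphism `c ⊗ id_V` of `V ⊗ (V ⊗ V)` (transported along associativity). -/
def opC1 (c : V ⊗[K] V →ₗ[K] V ⊗[K] V) :
    V ⊗[K] (V ⊗[K] V) →ₗ[K] V ⊗[K] (V ⊗[K] V) :=
  (TensorProduct.assoc K V V V).toLinearMap ∘ₗ
    LinearMap.rTensor V c ∘ₗ (TensorProduct.assoc K V V V).symm.toLinearMap

/-- The endomorphism `id_V ⊗ c` of `V ⊗ (V ⊗ V)`. -/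
def opC2 (c : V ⊗[K] V →ₗ[K] V ⊗[K] V) :
    V ⊗[K] (V ⊗[K] V) →ₗ[K] V ⊗[K] (V ⊗[K] V) :=
  LinearMap.lTensor V c

/-- The map `b ⊗ id_V : V ⊗ (V ⊗ V) → V ⊗ V`. -/
def opB1 (b : V ⊗[K] V →ₗ[K] V) :
    V ⊗[K] (V ⊗[K] V) →ₗ[K] V ⊗[K] V :=
  LinearMap.rTensor V b ∘ₗ (TensorProduct.assoc K V V V).symm.toLinearMap

/-- The map `id_V ⊗ b : V ⊗ (V ⊗ V) → V ⊗ V`. -/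
def opB2 (b : V ⊗[K] V →ₗ[K] V) :
    V ⊗[K] (V ⊗[K] V) →ₗ[K] V ⊗[K] V :=
  LinearMap.lTensor V b

/-- The braid equation `c₁ ∘ c₂ ∘ c₁ = c₂ ∘ c₁ ∘ c₂`. -/
def BraidEq (c : V ⊗[K] V →ₗ[K] V ⊗[K] V) : Prop :=
  opC1 c ∘ₗ opC2 c ∘ₗ opC1 c = opC2 c ∘ₗ opC1 c ∘ₗ opC2 c

/-- `c` is of Hecke type of mark `lam`: `(c + id) ∘ (c - lam • id) = 0`. -/
def IsHecke (lam : K) (c : V ⊗[K] V →ₗ[K] V ⊗[K] V) : Prop :=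
  (c + LinearMap.id) ∘ₗ (c - lam • LinearMap.id) = 0

/-- `b` is a `c`-bracket: `c ∘ b₁ = b₂ ∘ c₁ ∘ c₂` and `c ∘ b₂ = b₁ ∘ c₂ ∘ c₁`. -/
def IsBracket (c : V ⊗[K] V →ₗ[K] V ⊗[K] V) (b : V ⊗[K] V →ₗ[K] V) : Prop :=
  c ∘ₗ opB1 b = opB2 b ∘ₗ opC1 c ∘ₗ opC2 c ∧
  c ∘ₗ opB2 b = opB1 b ∘ₗ opC2 c ∘ₗ opC1 c

/-- The linear map `V ⊗ V → T(V)`, `v ⊗ w ↦ ι v * ι w`. -/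
def tensMul : V ⊗[K] V →ₗ[K] TensorAlgebra K V :=
  LinearMap.mul' K (TensorAlgebra K V) ∘ₗ
    TensorProduct.map (TensorAlgebra.ι K) (TensorAlgebra.ι K)

/-- The relation on `T(V)` whose associated ring quotient is
`U(V,c,b) = T(V)/(c(z) - lam•z - b(z) : z ∈ V ⊗ V)`. -/
def envRel (lam : K) (c : V ⊗[K] V →ₗ[K] V ⊗[K] V) (b : V ⊗[K] V →ₗ[K] V) :
    TensorAlgebra K V → TensorAlgebra K V → Prop :=
  fun x y => ∃ z : V ⊗[K] V,
    x = tensMul (c z) ∧ y = lam • tensMul z + TensorAlgebra.ι K (b z)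

/-- The canonical map `ι_{c,b} : V → U(V,c,b)`. -/
def envIota (lam : K) (c : V ⊗[K] V →ₗ[K] V ⊗[K] V) (b : V ⊗[K] V →ₗ[K] V) :
    V →ₗ[K] RingQuot (envRel lam c b) :=
  (RingQuot.mkAlgHom K (envRel lam c b)).toLinearMap ∘ₗ TensorAlgebra.ι K

/-- The q-integer `(n)_lam = 1 + lam + ⋯ + lam^(n-1)`. -/
def qInt (lam : K) (n : ℕ) : K := ∑ i ∈ Finset.range n, lam ^ i

/-- The q-factorial `(n)!_lam = (1)_lam (2)_lam ⋯ (n)_lam`. -/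
def qFac (lam : K) (n : ℕ) : K := ∏ i ∈ Finset.range n, qInt lam (i + 1)

/-
For `c = id` the braid equation is trivial, `(c + 1)(c - λ) = 2(1 - λ) = 0` in characteristic `2`,
and on a line every `b` is an `id`-bracket, since both sides of the bracket identities are
multiples of `x ⊗ x`. For injectivity of `ι_{c,b}` it suffices to find a character of `U(V, id, b)`
that is nonzero on `x`: sending `x` to `t` respects the relation `x² = λx² + a x` exactly when
`(1 - λ) t² = a t`, so `t = a / (1 - λ) ≠ 0` works.
-/

@[simp]
lemma opC1_id : opC1 (LinearMap.id : V ⊗[K] V →ₗ[K] V ⊗[K] V) = LinearMap.id := by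
  ext
  simp [opC1]

@[simp]
lemma opC2_id : opC2 (LinearMap.id : V ⊗[K] V →ₗ[K] V ⊗[K] V) = LinearMap.id :=
  LinearMap.lTensor_id V (V ⊗[K] V)

lemma braidEq_id : BraidEq (LinearMap.id : V ⊗[K] V →ₗ[K] V ⊗[K] V) := by
  simp [BraidEq]

lemma isHecke_id_of_two_eq_zero (h2 : (2 : K) = 0) (lam : K) :
    IsHecke lam (LinearMap.id : V ⊗[K] V →ₗ[K] V ⊗[K] V) := by
  rw [IsHecke, ← two_smul K LinearMap.id, h2, zero_smul, LinearMap.zero_comp]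

lemma isBracket_id_iff (b : V ⊗[K] V →ₗ[K] V) :
    IsBracket (LinearMap.id : V ⊗[K] V →ₗ[K] V ⊗[K] V) b ↔ opB1 b = opB2 b := by
  simp [IsBracket, eq_comm]

lemma tensMul_comp_lift {A : Type*} [Semiring A] [Algebra K A] (f : V →ₗ[K] A) :
    (TensorAlgebra.lift K f).toLinearMap ∘ₗ tensMul =
      LinearMap.mul' K A ∘ₗ TensorProduct.map f f := by
  ext
  simp [tensMul]

/-- `f` extends to an algebra map `U(V, c, b) → A` through `ι_{c,b}`. -/
lemma envIota_injective_of_injective {A : Type*} [Semiring A] [Algebra K A] {lam : K}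
    {c : V ⊗[K] V →ₗ[K] V ⊗[K] V} {b : V ⊗[K] V →ₗ[K] V} (f : V →ₗ[K] A)
    (hrel : LinearMap.mul' K A ∘ₗ TensorProduct.map f f ∘ₗ c =
      lam • (LinearMap.mul' K A ∘ₗ TensorProduct.map f f) + f ∘ₗ b)
    (hf : Function.Injective f) :
    Function.Injective (envIota lam c b) := by
  set F := TensorAlgebra.lift K f
  have hF : ∀ z, F (tensMul z) = LinearMap.mul' K A (TensorProduct.map f f z) :=
    LinearMap.congr_fun (tensMul_comp_lift f)
  have hresp : ∀ ⦃p q⦄, envRel lam c b p q → F p = F q := by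
    rintro _ _ ⟨z, rfl, rfl⟩
    simpa [F, hF] using LinearMap.congr_fun hrel z
  refine Function.Injective.of_comp (f := RingQuot.liftAlgHom K ⟨F, hresp⟩) ?_
  convert hf using 1
  ext v
  simp [envIota, F]

section Line

variable {x : V} (hspan : ∀ v : V, ∃ k : K, v = k • x)
include hspan

lemma tensor_ext_of_forall_eq_smul {M : Type*} [AddCommGroup M] [Module K M]
    {g h : V ⊗[K] V →ₗ[K] M} (hgh : g (x ⊗ₜ x) = h (x ⊗ₜ x)) : g = h := by
  refine TensorProduct.ext' fun v w => ?_
  obtain ⟨k, rfl⟩ := hspan v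
  obtain ⟨l, rfl⟩ := hspan w
  simp only [← smul_tmul', tmul_smul, map_smul, hgh]

lemma opB1_eq_opB2_of_forall_eq_smul (b : V ⊗[K] V →ₗ[K] V) : opB1 b = opB2 b := by
  refine TensorProduct.ext (LinearMap.ext fun v => tensor_ext_of_forall_eq_smul hspan ?_)
  obtain ⟨k, rfl⟩ := hspan v
  obtain ⟨a, ha⟩ := hspan (b (x ⊗ₜ x))
  simp [opB1, opB2, ha, smul_tmul', tmul_smul, smul_smul]

lemma envIota_id_injective_of_forall_eq_smul (hx : x ≠ 0) {a lam : K} (ha : a ≠ 0)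
    (hlam : lam ≠ 1) {b : V ⊗[K] V →ₗ[K] V} (hbx : b (x ⊗ₜ x) = a • x) :
    Function.Injective (envIota lam (LinearMap.id : V ⊗[K] V →ₗ[K] V ⊗[K] V) b) := by
  have hlam' : 1 - lam ≠ 0 := sub_ne_zero.2 hlam.symm
  set t := a / (1 - lam)
  have ht : t ≠ 0 := div_ne_zero ha hlam'
  have htt : (1 - lam) * t = a := mul_div_cancel₀ a hlam'
  let e : K ≃ₗ[K] V := LinearEquiv.ofBijective (LinearMap.toSpanSingleton K V x)
    ⟨smul_left_injective K hx, fun v => (hspan v).imp fun _ hk => hk.symm⟩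
  have hex : e.symm x = 1 := e.symm_apply_eq.2 (one_smul K x).symm
  refine envIota_injective_of_injective (t • e.symm.toLinearMap)
    (tensor_ext_of_forall_eq_smul hspan ?_) ((mul_right_injective₀ ht).comp e.symm.injective)
  simp only [LinearMap.comp_id, LinearMap.coe_comp, Function.comp_apply, map_tmul,
    LinearMap.smul_apply, LinearEquiv.coe_coe, hex, smul_eq_mul, mul_one, LinearMap.mul'_apply,
    LinearMap.add_apply, LinearMap.coe_smul, hbx, Pi.smul_apply, map_smul]
  linear_combination t * htt

end Line

theorem masuoka_counterexample_char_two_general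
    (hchar : ringChar K = 2)
    (a : K) (ha : a ≠ 0)
    (lam : K) (hlam1 : lam ≠ 1)
    (x : V) (hx : x ≠ 0) (hspan : ∀ v : V, ∃ k : K, v = k • x)
    (b : V ⊗[K] V →ₗ[K] V) (hbx : b (x ⊗ₜ[K] x) = a • x) :
    BraidEq (LinearMap.id : V ⊗[K] V →ₗ[K] V ⊗[K] V) ∧
    IsHecke lam (LinearMap.id : V ⊗[K] V →ₗ[K] V ⊗[K] V) ∧
    IsBracket (LinearMap.id : V ⊗[K] V →ₗ[K] V ⊗[K] V) b ∧
    Function.Injective (envIota lam (LinearMap.id : V ⊗[K] V →ₗ[K] V ⊗[K] V) b) ∧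
    b ≠ 0 := by
  have h2 : (2 : K) = 0 := by exact_mod_cast hchar ▸ ringChar.Nat.cast_ringChar
  refine ⟨braidEq_id, isHecke_id_of_two_eq_zero h2 lam,
    (isBracket_id_iff b).2 (opB1_eq_opB2_of_forall_eq_smul hspan b),
    envIota_id_injective_of_forall_eq_smul hspan hx ha hlam1 hbx, ?_⟩
  rintro rfl
  exact smul_ne_zero ha hx hbx.symm

/-- **Example (Masuoka).**  In characteristic `2`, for `V = K·x` one-dimensional,
`c = id` and `b(x ⊗ x) = a·x` with `a ≠ 0`, for any `lam ∉ {0,1}` with `(3)!_lam ≠ 0`: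
`c` satisfies the braid equation and is of Hecke type of mark `lam`, `b` is a `c`-bracket,
`ι_{c,b} : V → U(V,c,b)` is injective, and yet `b ≠ 0`.  Hence `char K ≠ 2` cannot be
dropped from the triviality theorem for brackets. -/
theorem masuoka_counterexample_char_two
    (hchar : ringChar K = 2)
    (a : K) (ha : a ≠ 0)
    (lam : K) (hlam0 : lam ≠ 0) (hlam1 : lam ≠ 1) (hfac : qFac lam 3 ≠ 0)
    (x : V) (hx : x ≠ 0) (hspan : ∀ v : V, ∃ k : K, v = k • x)
    (b : V ⊗[K] V →ₗ[K] V) (hbx : b (x ⊗ₜ[K] x) = a • x) :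
    BraidEq (LinearMap.id : V ⊗[K] V →ₗ[K] V ⊗[K] V) ∧
    IsHecke lam (LinearMap.id : V ⊗[K] V →ₗ[K] V ⊗[K] V) ∧
    IsBracket (LinearMap.id : V ⊗[K] V →ₗ[K] V ⊗[K] V) b ∧
    Function.Injective (envIota lam (LinearMap.id : V ⊗[K] V →ₗ[K] V ⊗[K] V) b) ∧
    b ≠ 0 :=
  masuoka_counterexample_char_two_general hchar a ha lam hlam1 x hx hspan b hbx

end
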